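/- The function V satisfies: (i) V is non-decreasing in each argument; (ii) −m_θ < V(t,x) ≤ 0 for all t ≥ 0 and x ∈ ℝ; (iii) V(t,x) < 0 whenever t < m_θ and x < h^θ(t), where h^θ(t) = σ²(log 2 − θt)/(√(μ²+2σ²θ)+μ); (iv) V(t,x) = 0 for all t ≥ m_θ and x ∈ ℝ. -/

import Mathlib

open MeasureTheory ProbabilityTheory Real Set Filter
open scoped ENNReal NNReal

noncomputable section

/-- `B` is a standard `(F t)`-Brownian motion (on nonnegative times) under `P`. -/
structure IsStandardBM {Ω : Type*} {mΩ : MeasurableSpace Ω} (P : Measure Ω)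
    (F : Filtration ℝ mΩ) (B : ℝ → Ω → ℝ) : Prop where
  adapted : ∀ t : ℝ, 0 ≤ t → Measurable[F t] (B t)
  start : ∀ᵐ ω ∂P, B 0 ω = 0
  cont : ∀ᵐ ω ∂P, ContinuousOn (fun t => B t ω) (Set.Ici (0 : ℝ))
  incr_law : ∀ t s : ℝ, 0 ≤ t → 0 ≤ s →
    P.map (fun ω => B (t + s) ω - B t ω) = gaussianReal 0 s.toNNReal
  incr_indep : ∀ t s : ℝ, 0 ≤ t → 0 ≤ s →
    Indep (MeasurableSpace.comap (fun ω => B (t + s) ω - B t ω) Real.measurableSpace)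
      (F t) P

/-- The filtration `F` satisfies the usual conditions under `P`: it is right-continuous and
each `F t` contains all `P`-null sets. -/
structure UsualConditions {Ω : Type*} {mΩ : MeasurableSpace Ω} (P : Measure Ω)
    (F : Filtration ℝ mΩ) : Prop where
  right_cont : ∀ t : ℝ, (F t : MeasurableSpace Ω) = ⨅ s ∈ Set.Ioi t, (F s : MeasurableSpace Ω)
  complete : ∀ t : ℝ, ∀ s : Set Ω, P s = 0 → MeasurableSet[F t] s

/-- `e` is an exponential random variable with rate `θ`, independent of `𝓕_∞ = ⨆ t, F t`. -/
structure IsIndepExp {Ω : Type*} {mΩ : MeasurableSpace Ω} (P : Measure Ω)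
    (F : Filtration ℝ mΩ) (θ : ℝ) (e : Ω → ℝ) : Prop where
  measurable : Measurable e
  law : P.map e = expMeasure θ
  indep : Indep (MeasurableSpace.comap e Real.measurableSpace)
    (⨆ t : ℝ, (F t : MeasurableSpace Ω)) P

/-- `F^θ(x) = 1 - exp (-c x)` for `x ≥ 0`, `0` for `x < 0` (here `c = c_θ`). -/
def Fth (c x : ℝ) : ℝ := if 0 ≤ x then 1 - Real.exp (-c * x) else 0

/-- `G^θ(s,x) = 1 + 2 e^{-θ s} (F^θ(x) - 1)`. -/
def Gth (θ c s x : ℝ) : ℝ := 1 + 2 * Real.exp (-θ * s) * (Fth c x - 1)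

/-- The expected cost `𝔼[∫_0^τ G^θ(t+s, x+X_s) ds]` associated with a stopping time `τ`. -/
def payoff {Ω : Type*} {mΩ : MeasurableSpace Ω} (P : Measure Ω) (θ c : ℝ)
    (X : ℝ → Ω → ℝ) (t x : ℝ) (τ : Ω → ℝ) : ℝ :=
  ∫ ω, (∫ s in Set.Ioc (0 : ℝ) (τ ω), Gth θ c (t + s) (x + X s ω)) ∂P

/-- The value function `V(t,x) = inf_τ 𝔼[∫_0^τ G^θ(t+s, x+X_s) ds]`, infimum over all
`(F t)`-stopping times. -/
def valueV {Ω : Type*} {mΩ : MeasurableSpace Ω} (P : Measure Ω) (F : Filtration ℝ mΩ)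
    (θ c : ℝ) (X : ℝ → Ω → ℝ) (t x : ℝ) : ℝ :=
  sInf {v : ℝ | ∃ τ : Ω → ℝ, IsStoppingTime F (fun ω => (τ ω : WithTop ℝ)) ∧ (∀ ω, 0 ≤ τ ω) ∧
    v = payoff P θ c X t x τ}

/-- The optimal stopping boundary `b(t) = inf {x : V(t,x) = 0}`. -/
def bdry {Ω : Type*} {mΩ : MeasurableSpace Ω} (P : Measure Ω) (F : Filtration ℝ mΩ)
    (θ c : ℝ) (X : ℝ → Ω → ℝ) (t : ℝ) : ℝ :=
  sInf {x : ℝ | valueV P F θ c X t x = 0}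

/-- The last zero of `X` before the time `e ω`:  `g = sup {t ∈ [0, e] : X_t ≤ 0}`
(with `sup ∅ = 0`). -/
def lastZero {Ω : Type*} (X : ℝ → Ω → ℝ) (e : Ω → ℝ) (ω : Ω) : ℝ :=
  sSup {t : ℝ | 0 ≤ t ∧ t ≤ e ω ∧ X t ω ≤ 0}

/-!
Everything rests on the closed form `G^θ(s, x) = 1 - 2 exp (-θ s - c (x ∨ 0))`: it is nondecreasing
in both arguments, at most `1`, and at least `1 - 2 e^{-θ s}`. Monotonicity of `V` is then
pathwise. Stopping at once gives `V ≤ 0`; the lower bound comes from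
`∫_0^T (1 - 2 e^{-θ s}) ds ≥ (log 2 - 1) / θ > -m_θ`; for `t ≥ m_θ` the integrand is nonnegative.
Below `h^θ` we have `G^θ(t, x) < 0`, and by dominated convergence
`ε⁻¹ 𝔼[∫_0^ε G^θ(t + s, x + X_s) ds] → G^θ(t, x)` as `ε → 0⁺`, so stopping at a small
deterministic time beats stopping at once.
-/

open scoped Topology

theorem Fth_eq (c x : ℝ) : Fth c x = 1 - exp (-(c * max x 0)) := by
  rcases le_or_gt 0 x with hx | hx
  · simp [Fth, hx]
  · simp [Fth, hx.not_ge, max_eq_right hx.le]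

theorem Gth_eq (θ c s x : ℝ) : Gth θ c s x = 1 - 2 * exp (-θ * s - c * max x 0) := by
  rw [Gth, Fth_eq, exp_sub, exp_neg]
  ring

theorem continuous_Gth (θ c : ℝ) : Continuous fun p : ℝ × ℝ => Gth θ c p.1 p.2 := by
  simp only [Gth_eq]
  fun_prop

theorem Gth_le_one (θ c s x : ℝ) : Gth θ c s x ≤ 1 := by
  rw [Gth_eq]
  linarith [exp_pos (-θ * s - c * max x 0)]

theorem one_sub_two_mul_exp_le_Gth {θ c : ℝ} (hc : 0 ≤ c) (s x : ℝ) :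
    1 - 2 * exp (-θ * s) ≤ Gth θ c s x := by
  rw [Gth_eq]
  gcongr
  nlinarith [le_max_right x 0]

theorem Gth_le_Gth {θ c s s' x x' : ℝ} (hθ : 0 ≤ θ) (hc : 0 ≤ c) (hs : s ≤ s') (hx : x ≤ x') :
    Gth θ c s x ≤ Gth θ c s' x' := by
  have h1 : θ * s ≤ θ * s' := mul_le_mul_of_nonneg_left hs hθ
  have h2 : c * max x 0 ≤ c * max x' 0 := mul_le_mul_of_nonneg_left (max_le_max_right 0 hx) hc
  simp only [Gth_eq]
  gcongr 1 - 2 * exp ?_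
  linarith

theorem abs_Gth_le_one {θ c s : ℝ} (hθ : 0 ≤ θ) (hc : 0 ≤ c) (hs : 0 ≤ s) (x : ℝ) :
    |Gth θ c s x| ≤ 1 := by
  refine abs_le.2 ⟨?_, Gth_le_one θ c s x⟩
  have : exp (-θ * s) ≤ 1 := exp_le_one_iff.2 (by nlinarith)
  linarith [one_sub_two_mul_exp_le_Gth (θ := θ) hc s x]

theorem Gth_nonneg {θ c s : ℝ} (hc : 0 ≤ c) (hs : log 2 ≤ θ * s) (x : ℝ) : 0 ≤ Gth θ c s x := by
  have : exp (-θ * s) ≤ 2⁻¹ := by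
    rw [← exp_log (by norm_num : (0:ℝ) < 2⁻¹), log_inv]
    gcongr
    linarith
  linarith [one_sub_two_mul_exp_le_Gth (θ := θ) hc s x]

theorem Gth_neg_iff {θ c s x : ℝ} : Gth θ c s x < 0 ↔ θ * s + c * max x 0 < log 2 := by
  have h2 : 2 * exp (-θ * s - c * max x 0) = exp (log 2 - (θ * s + c * max x 0)) := by
    conv_lhs => rw [← exp_log (two_pos : (0:ℝ) < 2), ← exp_add]
    ring_nf
  rw [Gth_eq, sub_neg, h2, one_lt_exp_iff, sub_pos]

theorem Gth_neg_of_lt {θ c t x h : ℝ} (hc : 0 < c) (hθt : θ * t < log 2)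
    (hch : c * h = log 2 - θ * t) (hx : x < h) : Gth θ c t x < 0 := by
  have hh : 0 < h := pos_of_mul_pos_right (by linarith) hc.le
  have : c * max x 0 < c * h := mul_lt_mul_of_pos_left (max_lt hx hh) hc
  exact Gth_neg_iff.2 (by linarith)

theorem neg_lt_sqrt_sq_add {a : ℝ} (ha : 0 < a) (μ : ℝ) : -μ < √(μ ^ 2 + a) := by
  have : |μ| < √(μ ^ 2 + a) := by
    rw [← sqrt_sq_eq_abs]
    exact sqrt_lt_sqrt (sq_nonneg μ) (by linarith)
  linarith [neg_abs_le μ]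

theorem integral_one_sub_two_mul_exp {θ T : ℝ} (hθ : θ ≠ 0) (hT : 0 ≤ T) :
    ∫ s in Ioc 0 T, (1 - 2 * exp (-θ * s)) = T + 2 / θ * exp (-θ * T) - 2 / θ := by
  rw [← intervalIntegral.integral_of_le hT]
  have hderiv : ∀ s ∈ uIcc 0 T,
      HasDerivAt (fun u => u + 2 / θ * exp (-θ * u)) (1 - 2 * exp (-θ * s)) s := by
    intro s _
    refine ((hasDerivAt_id' s).add
      (((hasDerivAt_id' s).const_mul (-θ)).exp.const_mul (2 / θ))).congr_deriv ?_
    field_simp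
    ring
  rw [intervalIntegral.integral_eq_sub_of_hasDerivAt hderiv
    ((by fun_prop : Continuous fun s => 1 - 2 * exp (-θ * s)).intervalIntegrable 0 T)]
  simp

-- The minimum over `T` of `∫_0^T (1 - 2 e^{-θ s}) ds` is attained at `T = log 2 / θ`.
theorem log_two_sub_one_div_le_integral {θ T : ℝ} (hθ : 0 < θ) (hT : 0 ≤ T) :
    (log 2 - 1) / θ ≤ ∫ s in Ioc 0 T, (1 - 2 * exp (-θ * s)) := by
  have h := add_one_le_exp (log 2 - θ * T)
  rw [exp_sub, exp_log two_pos, div_eq_mul_inv, ← exp_neg] at h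
  rw [integral_one_sub_two_mul_exp hθ.ne' hT, div_le_iff₀ hθ]
  field_simp
  rw [mul_comm θ T] at h
  linarith

theorem log_two_sub_one_div_le_setIntegral {θ T : ℝ} (hθ : 0 < θ) (hT : 0 ≤ T) {f : ℝ → ℝ}
    (hf : ∀ s ∈ Ioc 0 T, 1 - 2 * exp (-θ * s) ≤ f s) :
    (log 2 - 1) / θ ≤ ∫ s in Ioc 0 T, f s := by
  by_cases hfi : IntegrableOn f (Ioc 0 T)
  · exact (log_two_sub_one_div_le_integral hθ hT).trans
      (setIntegral_mono_on
        (by fun_prop : Continuous fun s => 1 - 2 * exp (-θ * s)).integrableOn_Ioc hfi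
        measurableSet_Ioc hf)
  · rw [integral_undef hfi]
    exact div_nonpos_of_nonpos_of_nonneg (by linarith [log_two_lt_d9]) hθ.le

theorem tendsto_inv_mul_setIntegral_Ioc {f : ℝ → ℝ} (hf : ContinuousOn f (Ici 0)) :
    Tendsto (fun ε => ε⁻¹ * ∫ s in Ioc 0 ε, f s) (𝓝[>] 0) (𝓝 (f 0)) := by
  have hderiv := intervalIntegral.integral_hasDerivWithinAt_right (a := 0) (s := Ici 0)
    (t := Ioi 0) .refl
    ((hf.mono Ioi_subset_Ici_self).stronglyMeasurableAtFilter_nhdsWithin measurableSet_Ioi 0)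
    ((hf 0 self_mem_Ici).mono Ioi_subset_Ici_self)
  refine ((hasDerivWithinAt_iff_tendsto_slope' (lt_irrefl 0)).1 hderiv.Ioi_of_Ici).congr'
    (eventually_nhdsWithin_of_forall fun ε (hε : 0 < ε) => ?_)
  simp [slope_def_field, intervalIntegral.integral_of_le hε.le, div_eq_inv_mul]

def pathCost (θ c t x : ℝ) (f : ℝ → ℝ) (T : ℝ) : ℝ :=
  ∫ s in Ioc 0 T, Gth θ c (t + s) (x + f s)

section pathCost

variable {θ c t x : ℝ} {f : ℝ → ℝ}

theorem pathCost_zero_right : pathCost θ c t x f 0 = 0 := by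
  simp [pathCost]

theorem log_two_sub_one_div_le_pathCost (hθ : 0 < θ) (hc : 0 ≤ c) (ht : 0 ≤ t) {T : ℝ}
    (hT : 0 ≤ T) : (log 2 - 1) / θ ≤ pathCost θ c t x f T := by
  refine log_two_sub_one_div_le_setIntegral hθ hT fun s _ => ?_
  have : exp (-θ * (t + s)) ≤ exp (-θ * s) := exp_le_exp.2 (by nlinarith)
  linarith [one_sub_two_mul_exp_le_Gth (θ := θ) hc (t + s) (x + f s)]

theorem pathCost_nonneg (hθ : 0 ≤ θ) (hc : 0 ≤ c) (ht : log 2 ≤ θ * t) (T : ℝ) :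
    0 ≤ pathCost θ c t x f T :=
  setIntegral_nonneg measurableSet_Ioc fun s hs =>
    Gth_nonneg hc (by nlinarith [hs.1]) _

theorem abs_pathCost_le (hθ : 0 ≤ θ) (hc : 0 ≤ c) (ht : 0 ≤ t) {T : ℝ} (hT : 0 ≤ T) :
    |pathCost θ c t x f T| ≤ T := by
  have := norm_setIntegral_le_of_norm_le_const (μ := volume) (s := Ioc 0 T) (C := 1)
    (f := fun s => Gth θ c (t + s) (x + f s)) measure_Ioc_lt_top
    fun s hs => abs_Gth_le_one hθ hc (by linarith [hs.1]) _
  simpa [pathCost, hT] using this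

theorem continuousOn_Gth_comp {s : Set ℝ} (hf : ContinuousOn f s) :
    ContinuousOn (fun u => Gth θ c (t + u) (x + f u)) s :=
  (continuous_Gth θ c).comp_continuousOn ((continuousOn_const.add continuousOn_id).prodMk
    (continuousOn_const.add hf))

theorem pathCost_le_pathCost (hθ : 0 ≤ θ) (hc : 0 ≤ c) {T : ℝ} (hf : ContinuousOn f (Icc 0 T))
    {t' x' : ℝ} (ht : t ≤ t') (hx : x ≤ x') : pathCost θ c t x f T ≤ pathCost θ c t' x' f T :=
  setIntegral_mono_on ((continuousOn_Gth_comp hf).integrableOn_Icc.mono_set Ioc_subset_Icc_self)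
    ((continuousOn_Gth_comp hf).integrableOn_Icc.mono_set Ioc_subset_Icc_self) measurableSet_Ioc
    fun s _ => Gth_le_Gth hθ hc (by linarith) (by linarith)

theorem tendsto_inv_mul_pathCost (hf : ContinuousOn f (Ici 0)) (hf0 : f 0 = 0) :
    Tendsto (fun ε => ε⁻¹ * pathCost θ c t x f ε) (𝓝[>] 0) (𝓝 (Gth θ c t x)) := by
  simpa [pathCost, hf0] using
    tendsto_inv_mul_setIntegral_Ioc (continuousOn_Gth_comp (θ := θ) (c := c) (t := t) (x := x) hf)

end pathCost

section Measurability

variable {Ω : Type*} {mΩ : MeasurableSpace Ω} {P : Measure Ω} {X : ℝ → Ω → ℝ}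

theorem exists_measurable_uncurry_ae_eqOn (hXm : ∀ s, 0 ≤ s → Measurable (X s))
    (hXc : ∀ᵐ ω ∂P, ContinuousOn (fun s => X s ω) (Ici 0)) :
    ∃ Y : ℝ → Ω → ℝ, Measurable (Function.uncurry Y) ∧
      ∀ᵐ ω ∂P, EqOn (fun s => Y s ω) (fun s => X s ω) (Ici 0) := by
  classical
  obtain ⟨N, hNsub, hNm, hN0⟩ := exists_measurable_superset_of_null (ae_iff.1 hXc)
  refine ⟨fun s ω => if ω ∈ N then 0 else X (max s 0) ω, ?_, ?_⟩
  · refine measurable_uncurry_of_continuous_of_measurable (fun ω => ?_)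
      fun s => Measurable.ite hNm measurable_const (hXm _ (le_max_right _ _))
    by_cases hω : ω ∈ N
    · simpa [hω] using continuous_const
    · have hcont : ContinuousOn (fun s => X s ω) (Ici 0) := not_not.1 fun h => hω (hNsub h)
      simp only [hω, if_false]
      exact hcont.comp_continuous (continuous_id.max continuous_const)
        fun s => le_max_right s 0
  · filter_upwards [measure_eq_zero_iff_ae_notMem.1 hN0] with ω hω s hs
    simp [hω, max_eq_left (show 0 ≤ s from hs)]

theorem aestronglyMeasurable_setIntegral_Ioc_comp (hXm : ∀ s, 0 ≤ s → Measurable (X s))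
    (hXc : ∀ᵐ ω ∂P, ContinuousOn (fun s => X s ω) (Ici 0)) {g : ℝ → ℝ → ℝ}
    (hg : Continuous (Function.uncurry g)) {τ : Ω → ℝ} (hτ : Measurable τ) :
    AEStronglyMeasurable (fun ω => ∫ s in Ioc 0 (τ ω), g s (X s ω)) P := by
  obtain ⟨Y, hYm, hYX⟩ := exists_measurable_uncurry_ae_eqOn hXm hXc
  have hmeas : Measurable ({q : Ω × ℝ | 0 < q.2 ∧ q.2 ≤ τ q.1}.indicator
      fun q => g q.2 (Y q.2 q.1)) :=
    (hg.measurable.comp (measurable_snd.prodMk (hYm.comp measurable_swap))).indicator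
      ((measurableSet_lt measurable_const measurable_snd).inter
        (measurableSet_le measurable_snd (hτ.comp measurable_fst)))
  refine ⟨_, hmeas.stronglyMeasurable.integral_prod_right' (ν := volume), ?_⟩
  filter_upwards [hYX] with ω hω
  rw [← integral_indicator measurableSet_Ioc]
  congr 1
  ext s
  by_cases hs : s ∈ Ioc 0 (τ ω)
  · rw [indicator_of_mem hs, indicator_of_mem (s := {q : Ω × ℝ | 0 < q.2 ∧ q.2 ≤ τ q.1}) hs]
    exact congrArg (g s) (hω hs.1.le).symm
  · rw [indicator_of_notMem hs, indicator_of_notMem (s := {q : Ω × ℝ | 0 < q.2 ∧ q.2 ≤ τ q.1}) hs]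

end Measurability

theorem measurable_of_isStoppingTime_coe {Ω : Type*} {mΩ : MeasurableSpace Ω}
    {F : Filtration ℝ mΩ} {τ : Ω → ℝ} (hτ : IsStoppingTime F fun ω => (τ ω : WithTop ℝ)) :
    Measurable τ :=
  measurable_of_Iic fun r => F.le r _ <| by
    have h := hτ r
    simp only [WithTop.coe_le_coe] at h
    exact h

section Payoff

variable {Ω : Type*} {mΩ : MeasurableSpace Ω} {P : Measure Ω} {X : ℝ → Ω → ℝ} {θ c t x : ℝ}

theorem payoff_eq_integral_pathCost (τ : Ω → ℝ) :
    payoff P θ c X t x τ = ∫ ω, pathCost θ c t x (fun s => X s ω) (τ ω) ∂P := rfl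

theorem aestronglyMeasurable_pathCost (hXm : ∀ s, 0 ≤ s → Measurable (X s))
    (hXc : ∀ᵐ ω ∂P, ContinuousOn (fun s => X s ω) (Ici 0)) {τ : Ω → ℝ} (hτ : Measurable τ) :
    AEStronglyMeasurable (fun ω => pathCost θ c t x (fun s => X s ω) (τ ω)) P :=
  aestronglyMeasurable_setIntegral_Ioc_comp (g := fun s y => Gth θ c (t + s) (x + y)) hXm hXc
    ((continuous_Gth θ c).comp (f := fun p : ℝ × ℝ => (t + p.1, x + p.2)) (by fun_prop)) hτ

theorem payoff_zero_right : payoff P θ c X t x 0 = 0 := by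
  simp [payoff_eq_integral_pathCost, pathCost_zero_right]

theorem integral_ge_of_forall_ge [IsProbabilityMeasure P] {f : Ω → ℝ} {a : ℝ} (ha : a ≤ 0)
    (hf : ∀ ω, a ≤ f ω) : a ≤ ∫ ω, f ω ∂P := by
  by_cases hfi : Integrable f P
  · simpa using integral_mono (integrable_const a) hfi hf
  · rwa [integral_undef hfi]

theorem payoff_nonneg (hθ : 0 ≤ θ) (hc : 0 ≤ c) (ht : log 2 ≤ θ * t) (τ : Ω → ℝ) :
    0 ≤ payoff P θ c X t x τ :=
  integral_nonneg fun ω => pathCost_nonneg hθ hc ht (τ ω)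

variable [IsProbabilityMeasure P]

theorem log_two_sub_one_div_le_payoff (hθ : 0 < θ) (hc : 0 ≤ c) (ht : 0 ≤ t) {τ : Ω → ℝ}
    (hτ : ∀ ω, 0 ≤ τ ω) : (log 2 - 1) / θ ≤ payoff P θ c X t x τ :=
  integral_ge_of_forall_ge (div_nonpos_of_nonpos_of_nonneg (by linarith [log_two_lt_d9]) hθ.le)
    fun ω => log_two_sub_one_div_le_pathCost hθ hc ht (hτ ω)

theorem payoff_le_payoff (hθ : 0 < θ) (hc : 0 ≤ c) (hXm : ∀ s, 0 ≤ s → Measurable (X s))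
    (hXc : ∀ᵐ ω ∂P, ContinuousOn (fun s => X s ω) (Ici 0)) {τ : Ω → ℝ} (hτm : Measurable τ)
    (hτ : ∀ ω, 0 ≤ τ ω) {t' x' : ℝ} (ht : 0 ≤ t) (htt' : t ≤ t') (hxx' : x ≤ x')
    (hint : Integrable (fun ω => pathCost θ c t' x' (fun s => X s ω) (τ ω)) P) :
    payoff P θ c X t x τ ≤ payoff P θ c X t' x' τ := by
  have hle : ∀ᵐ ω ∂P, pathCost θ c t x (fun s => X s ω) (τ ω) ≤
      pathCost θ c t' x' (fun s => X s ω) (τ ω) := by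
    filter_upwards [hXc] with ω hω
    exact pathCost_le_pathCost hθ.le hc (hω.mono Icc_subset_Ici_self) htt' hxx'
  have hint₀ : Integrable (fun ω => pathCost θ c t x (fun s => X s ω) (τ ω)) P :=
    integrable_of_le_of_le (aestronglyMeasurable_pathCost hXm hXc hτm)
      (ae_of_all _ fun ω => log_two_sub_one_div_le_pathCost hθ hc ht (hτ ω)) hle
      (integrable_const ((log 2 - 1) / θ)) hint
  exact integral_mono_ae hint₀ hint hle

theorem tendsto_inv_mul_payoff_const (hθ : 0 ≤ θ) (hc : 0 ≤ c) (ht : 0 ≤ t)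
    (hXm : ∀ s, 0 ≤ s → Measurable (X s))
    (hXc : ∀ᵐ ω ∂P, ContinuousOn (fun s => X s ω) (Ici 0)) (hX0 : ∀ᵐ ω ∂P, X 0 ω = 0) :
    Tendsto (fun ε => ε⁻¹ * payoff P θ c X t x fun _ => ε) (𝓝[>] 0) (𝓝 (Gth θ c t x)) := by
  simp_rw [payoff_eq_integral_pathCost, ← integral_const_mul]
  have hlim := tendsto_integral_filter_of_dominated_convergence (μ := P) (l := 𝓝[>] (0 : ℝ))
    (F := fun ε ω => ε⁻¹ * pathCost θ c t x (fun s => X s ω) ε) (f := fun _ => Gth θ c t x)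
    (fun _ => 1)
    (Eventually.of_forall fun ε =>
      (aestronglyMeasurable_pathCost hXm hXc measurable_const).const_mul _)
    (eventually_nhdsWithin_of_forall fun ε (hε : 0 < ε) => ae_of_all _ fun ω => ?_)
    (integrable_const 1) ?_
  · rwa [integral_const, probReal_univ, one_smul] at hlim
  · rw [norm_mul, norm_inv, Real.norm_of_nonneg hε.le, Real.norm_eq_abs]
    exact inv_mul_le_one_of_le₀ (abs_pathCost_le hθ hc ht hε.le) hε.le
  · filter_upwards [hXc, hX0] with ω hωc hω0
    exact tendsto_inv_mul_pathCost hωc hω0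

theorem exists_payoff_const_neg (hθ : 0 ≤ θ) (hc : 0 ≤ c) (ht : 0 ≤ t)
    (hXm : ∀ s, 0 ≤ s → Measurable (X s))
    (hXc : ∀ᵐ ω ∂P, ContinuousOn (fun s => X s ω) (Ici 0)) (hX0 : ∀ᵐ ω ∂P, X 0 ω = 0)
    (hG : Gth θ c t x < 0) : ∃ ε > 0, payoff P θ c X t x (fun _ => ε) < 0 := by
  obtain ⟨ε, hneg, hε⟩ := ((tendsto_inv_mul_payoff_const hθ hc ht hXm hXc hX0).eventually
    (gt_mem_nhds hG)).and self_mem_nhdsWithin |>.exists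
  refine ⟨ε, hε, ?_⟩
  simpa [hε.ne'] using mul_neg_of_pos_of_neg hε hneg

end Payoff

section Value

variable {Ω : Type*} {mΩ : MeasurableSpace Ω} {P : Measure Ω} {F : Filtration ℝ mΩ}
  {X : ℝ → Ω → ℝ} {θ c t x : ℝ}

theorem le_valueV {a : ℝ} (h : ∀ τ : Ω → ℝ, IsStoppingTime F (fun ω => (τ ω : WithTop ℝ)) →
    (∀ ω, 0 ≤ τ ω) → a ≤ payoff P θ c X t x τ) : a ≤ valueV P F θ c X t x :=
  le_csInf ⟨0, 0, isStoppingTime_const F 0, fun _ => le_rfl, payoff_zero_right.symm⟩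
    (by rintro _ ⟨τ, hτ, hτ0, rfl⟩; exact h τ hτ hτ0)

variable [IsProbabilityMeasure P]

theorem valueV_le_payoff (hθ : 0 < θ) (hc : 0 ≤ c) (ht : 0 ≤ t) {τ : Ω → ℝ}
    (hτ : IsStoppingTime F fun ω => (τ ω : WithTop ℝ)) (hτ0 : ∀ ω, 0 ≤ τ ω) :
    valueV P F θ c X t x ≤ payoff P θ c X t x τ :=
  csInf_le ⟨(log 2 - 1) / θ, by
      rintro _ ⟨τ', -, hτ', rfl⟩
      exact log_two_sub_one_div_le_payoff hθ hc ht hτ'⟩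
    ⟨τ, hτ, hτ0, rfl⟩

theorem valueV_nonpos (hθ : 0 < θ) (hc : 0 ≤ c) (ht : 0 ≤ t) : valueV P F θ c X t x ≤ 0 :=
  (valueV_le_payoff hθ hc ht (isStoppingTime_const F 0) fun _ => le_rfl).trans_eq
    payoff_zero_right

theorem log_two_sub_one_div_le_valueV (hθ : 0 < θ) (hc : 0 ≤ c) (ht : 0 ≤ t) :
    (log 2 - 1) / θ ≤ valueV P F θ c X t x :=
  le_valueV fun _ _ hτ0 => log_two_sub_one_div_le_payoff hθ hc ht hτ0

theorem valueV_le_valueV (hθ : 0 < θ) (hc : 0 ≤ c) (hXm : ∀ s, 0 ≤ s → Measurable (X s))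
    (hXc : ∀ᵐ ω ∂P, ContinuousOn (fun s => X s ω) (Ici 0)) {t' x' : ℝ} (ht : 0 ≤ t)
    (htt' : t ≤ t') (hxx' : x ≤ x') : valueV P F θ c X t x ≤ valueV P F θ c X t' x' := by
  refine le_valueV fun τ hτ hτ0 => ?_
  by_cases hint : Integrable (fun ω => pathCost θ c t' x' (fun s => X s ω) (τ ω)) P
  · exact (valueV_le_payoff hθ hc ht hτ hτ0).trans <| payoff_le_payoff hθ hc hXm hXc
      (measurable_of_isStoppingTime_coe hτ) hτ0 ht htt' hxx' hint
  · -- the Bochner integral of a non-integrable function is `0`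
    rw [payoff_eq_integral_pathCost, integral_undef hint]
    exact valueV_nonpos hθ hc ht

theorem valueV_neg (hθ : 0 < θ) (hc : 0 ≤ c) (ht : 0 ≤ t) (hXm : ∀ s, 0 ≤ s → Measurable (X s))
    (hXc : ∀ᵐ ω ∂P, ContinuousOn (fun s => X s ω) (Ici 0)) (hX0 : ∀ᵐ ω ∂P, X 0 ω = 0)
    (hG : Gth θ c t x < 0) : valueV P F θ c X t x < 0 := by
  obtain ⟨ε, hε, hneg⟩ := exists_payoff_const_neg hθ.le hc ht hXm hXc hX0 hG
  exact (valueV_le_payoff hθ hc ht (isStoppingTime_const F ε) fun _ => hε.le).trans_lt hneg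

theorem valueV_eq_zero (hθ : 0 < θ) (hc : 0 ≤ c) (ht : log 2 ≤ θ * t) :
    valueV P F θ c X t x = 0 := by
  have ht₀ : 0 < t := pos_of_mul_pos_right ((log_pos one_lt_two).trans_le ht) hθ.le
  exact le_antisymm (valueV_nonpos hθ hc ht₀.le)
    (le_valueV fun τ _ _ => payoff_nonneg hθ.le hc ht τ)

end Value

namespace IsStandardBM

variable {Ω : Type*} {mΩ : MeasurableSpace Ω} {P : Measure Ω} {F : Filtration ℝ mΩ}
  {B : ℝ → Ω → ℝ}

theorem measurable_withDrift (hB : IsStandardBM P F B) (μ σ s : ℝ) (hs : 0 ≤ s) :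
    Measurable fun ω => μ * s + σ * B s ω :=
  measurable_const.add (((hB.adapted s hs).mono (F.le s) le_rfl).const_mul σ)

theorem ae_continuousOn_withDrift (hB : IsStandardBM P F B) (μ σ : ℝ) :
    ∀ᵐ ω ∂P, ContinuousOn (fun s => μ * s + σ * B s ω) (Ici 0) := by
  filter_upwards [hB.cont] with ω hω
  exact (continuous_const_mul μ).continuousOn.add (continuousOn_const.mul hω)

theorem ae_withDrift_zero (hB : IsStandardBM P F B) (μ σ : ℝ) :
    ∀ᵐ ω ∂P, μ * 0 + σ * B 0 ω = 0 := by
  filter_upwards [hB.start] with ω hω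
  simp [hω]

end IsStandardBM

theorem stmt10_general {Ω : Type*} {mΩ : MeasurableSpace Ω} (P : Measure Ω) [IsProbabilityMeasure P]
    (F : Filtration ℝ mΩ)
    (B : ℝ → Ω → ℝ) (μ σ θ : ℝ) (hσ : 0 < σ) (hθ : 0 < θ)
    (hBM : IsStandardBM P F B)
    (X : ℝ → Ω → ℝ) (hX : X = fun t ω => μ * t + σ * B t ω)
    (mθ cθ : ℝ) (hm : mθ = Real.log 2 / θ)
    (hc : cθ = (Real.sqrt (μ ^ 2 + 2 * σ ^ 2 * θ) + μ) / σ ^ 2)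
    (hth : ℝ → ℝ)
    (hhth : ∀ t, hth t =
      σ ^ 2 * (Real.log 2 - θ * t) / (Real.sqrt (μ ^ 2 + 2 * σ ^ 2 * θ) + μ)) :
    (∀ t t' x : ℝ, 0 ≤ t → t ≤ t' → valueV P F θ cθ X t x ≤ valueV P F θ cθ X t' x) ∧
    (∀ t x y : ℝ, 0 ≤ t → x ≤ y → valueV P F θ cθ X t x ≤ valueV P F θ cθ X t y) ∧
    (∀ t x : ℝ, 0 ≤ t → -mθ < valueV P F θ cθ X t x ∧ valueV P F θ cθ X t x ≤ 0) ∧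
    (∀ t x : ℝ, 0 ≤ t → t < mθ → x < hth t → valueV P F θ cθ X t x < 0) ∧
    (∀ t x : ℝ, mθ ≤ t → valueV P F θ cθ X t x = 0) := by
  subst hX hm
  have hden : 0 < √(μ ^ 2 + 2 * σ ^ 2 * θ) + μ := by
    linarith [neg_lt_sqrt_sq_add (by positivity : 0 < 2 * σ ^ 2 * θ) μ]
  have hcθ : 0 < cθ := hc ▸ by positivity
  have hXm := hBM.measurable_withDrift μ σ
  have hXc := hBM.ae_continuousOn_withDrift μ σ
  have hX0 := hBM.ae_withDrift_zero μ σ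
  refine ⟨fun t t' x ht htt' => valueV_le_valueV hθ hcθ.le hXm hXc ht htt' le_rfl,
    fun t x y ht hxy => valueV_le_valueV hθ hcθ.le hXm hXc ht le_rfl hxy,
    fun t x ht => ⟨?_, valueV_nonpos hθ hcθ.le ht⟩,
    fun t x ht htm hx => valueV_neg hθ hcθ.le ht hXm hXc hX0
      (Gth_neg_of_lt hcθ ((lt_div_iff₀' hθ).1 htm) ?_ hx),
    fun t x ht => valueV_eq_zero hθ hcθ.le ((div_le_iff₀' hθ).1 ht)⟩
  · refine lt_of_lt_of_le ?_ (log_two_sub_one_div_le_valueV hθ hcθ.le ht)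
    rw [← neg_div]
    gcongr
    linarith [log_two_gt_d9]
  · rw [hc, hhth]
    field_simp

/-- Basic properties of `V`: it is non-decreasing in each argument,
takes values in `(-m_θ, 0]`, is strictly negative below the curve `h^θ`, and vanishes
for `t ≥ m_θ`. -/
theorem stmt10 {Ω : Type*} {mΩ : MeasurableSpace Ω} (P : Measure Ω) [IsProbabilityMeasure P]
    (F : Filtration ℝ mΩ) (hUC : UsualConditions P F)
    (B : ℝ → Ω → ℝ) (μ σ θ : ℝ) (hσ : 0 < σ) (hθ : 0 < θ)
    (hBM : IsStandardBM P F B)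
    (X : ℝ → Ω → ℝ) (hX : X = fun t ω => μ * t + σ * B t ω)
    (mθ cθ : ℝ) (hm : mθ = Real.log 2 / θ)
    (hc : cθ = (Real.sqrt (μ ^ 2 + 2 * σ ^ 2 * θ) + μ) / σ ^ 2)
    (hth : ℝ → ℝ)
    (hhth : ∀ t, hth t =
      σ ^ 2 * (Real.log 2 - θ * t) / (Real.sqrt (μ ^ 2 + 2 * σ ^ 2 * θ) + μ)) :
    (∀ t t' x : ℝ, 0 ≤ t → t ≤ t' → valueV P F θ cθ X t x ≤ valueV P F θ cθ X t' x) ∧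
    (∀ t x y : ℝ, 0 ≤ t → x ≤ y → valueV P F θ cθ X t x ≤ valueV P F θ cθ X t y) ∧
    (∀ t x : ℝ, 0 ≤ t → -mθ < valueV P F θ cθ X t x ∧ valueV P F θ cθ X t x ≤ 0) ∧
    (∀ t x : ℝ, 0 ≤ t → t < mθ → x < hth t → valueV P F θ cθ X t x < 0) ∧
    (∀ t x : ℝ, mθ ≤ t → valueV P F θ cθ X t x = 0) :=
  stmt10_general P F B μ σ θ hσ hθ hBM X hX mθ cθ hm hc hth hhth
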